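/- Characterization of the orthogonal surface: for Chern characters ξ and ζ in ℚ⁴, both of nonzero rank, (ξ,ζ) = 0 if and only if Δ(ζ) = P(μ(ξ) + μ(ζ)) − Δ(ξ). In other words, the orthogonal surface Q_ξ, the set of (slope, discriminant) pairs (μ,Δ) ∈ ℚ²×ℚ of rank-one characters orthogonal to ξ, is precisely the graph Δ = P(μ(ξ) + μ) − Δ(ξ). -/
import Mathlib


/-- A Chern character on ℙ¹×ℙ¹, recorded as a quadruple
`(ch₀, first component of ch₁, second component of ch₁, ch₂)`. -/
abbrev ChernChar : Type := ℚ × ℚ × ℚ × ℚ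

/-- The product of Chern characters (corresponding to tensor product, computed in the
cohomology ring of ℙ¹×ℙ¹). -/
def chProd (ζ ζ' : ChernChar) : ChernChar :=
  (ζ.1 * ζ'.1,
   ζ.1 * ζ'.2.1 + ζ.2.1 * ζ'.1,
   ζ.1 * ζ'.2.2.1 + ζ.2.2.1 * ζ'.1,
   ζ.1 * ζ'.2.2.2 + ζ.2.1 * ζ'.2.2.1 + ζ'.2.1 * ζ.2.2.1 + ζ.2.2.2 * ζ'.1)

/-- The Euler characteristic `χ(ζ) = r+a+b+c` (Hirzebruch–Riemann–Roch). -/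
def chChi (ζ : ChernChar) : ℚ := ζ.1 + ζ.2.1 + ζ.2.2.1 + ζ.2.2.2

/-- The Euler pairing `(ζ,ζ') := χ(ζ·ζ')`. -/
def eulerPair (ζ ζ' : ChernChar) : ℚ := chChi (chProd ζ ζ')

/-- The slope `μ(ζ) = (a/r, b/r)`. -/
def chSlope (ζ : ChernChar) : ℚ × ℚ := (ζ.2.1 / ζ.1, ζ.2.2.1 / ζ.1)

/-- The discriminant `Δ(ζ) = ab/r² − c/r`. -/
def chDisc (ζ : ChernChar) : ℚ := ζ.2.1 * ζ.2.2.1 / ζ.1 ^ 2 - ζ.2.2.2 / ζ.1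

/-- `P(x,y) = (x+1)(y+1)`, the Euler characteristic of `O(x,y)`. -/
def chP (x y : ℚ) : ℚ := (x + 1) * (y + 1)

/-- Characterization of the orthogonal surface: for `ξ`, `ζ` of nonzero rank,
`(ξ,ζ) = 0` iff `Δ(ζ) = P(μ(ξ) + μ(ζ)) − Δ(ξ)`.  In other words, the set of
(slope, discriminant) pairs of rank-one characters orthogonal to `ξ` is precisely the
graph `Δ = P(μ(ξ) + μ) − Δ(ξ)` (a rank-one character of slope `(x,y)` and
discriminant `Δ` is `(1, x, y, xy − Δ)`). -/
theorem orthogonal_surface_characterization (ξ ζ : ChernChar)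
    (hξ : ξ.1 ≠ 0) (hζ : ζ.1 ≠ 0) :
    (eulerPair ξ ζ = 0 ↔
      chDisc ζ = chP ((chSlope ξ).1 + (chSlope ζ).1) ((chSlope ξ).2 + (chSlope ζ).2)
        - chDisc ξ) ∧
    (∀ x y Δ : ℚ,
      eulerPair ξ ((1 : ℚ), x, y, x * y - Δ) = 0 ↔
        Δ = chP ((chSlope ξ).1 + x) ((chSlope ξ).2 + y) - chDisc ξ) := by
  have key : ∀ η : ChernChar, η.1 ≠ 0 →
      eulerPair ξ η = ξ.1 * η.1 *
        (chP ((chSlope ξ).1 + (chSlope η).1) ((chSlope ξ).2 + (chSlope η).2)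
          - chDisc ξ - chDisc η) := by
    intro η hη
    simp only [eulerPair, chChi, chProd, chP, chSlope, chDisc]
    field_simp
    ring
  have main : ∀ η : ChernChar, η.1 ≠ 0 →
      (eulerPair ξ η = 0 ↔
        chDisc η = chP ((chSlope ξ).1 + (chSlope η).1) ((chSlope ξ).2 + (chSlope η).2)
          - chDisc ξ) := by
    intro η hη
    rw [key η hη, mul_eq_zero, mul_eq_zero]
    constructor
    · rintro ((h | h) | h)
      · exact absurd h hξ
      · exact absurd h hη
      · linarith
    · intro h
      right; linarith
  refine ⟨main ζ hζ, fun x y Δ => ?_⟩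
  have h1 := main ((1 : ℚ), x, y, x * y - Δ) one_ne_zero
  simpa [chSlope, chDisc] using h1
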